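/- Assume the positivity condition: θ_k ∈ (0,π) for all 1 ≤ k ≤ N with ∑_{k=1}^N θ_k = 2π. Consider the N hyperplanes H_k := {λ ∈ ℝ^{N−2} : λ_k = 0} for 1 ≤ k ≤ N, where λ_{N−1} := vᵀλ and λ_N := wᵀλ. Then H_1,…,H_N are pairwise distinct if and only if it is NOT the case that N = 3, and NOT the case that N = 4 with θ_k + θ_{k+1} = π for some 1 ≤ k ≤ 4 (indices taken cyclically modulo 4). -/

import Mathlib

/-!
Each `H_k` is the kernel of a linear functional `ℓ_k`, and two kernels differ as soon as a
`2 × 2` minor `ℓ_a(x) ℓ_b(y) - ℓ_a(y) ℓ_b(x)` is nonzero. On coordinate vectors the minors are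
`1`, `v_i`, `w_i` and `v_i w_j - v_j w_i = sin (φ_j - φ_i) / sin θ_N`. Since `φ` increases
strictly from `0` to `2π`, `v_i = 0` iff `φ_i = π` and `w_i = 0` iff `φ_{N-1} - φ_i = π`, each for
at most one `i`, so for `N ≥ 5` a nonzero minor always exists. For `N = 4` the only obstructions
are `θ_1 + θ_2 = π` (then `λ_3 = v_1 λ_1`) and `θ_2 + θ_3 = π` (then `λ_4 = w_2 λ_2`), and for
`N = 3` always `λ_2 = v_1 λ_1`.
-/

/-- The cumulative angle `φ_k = ∑_{a=1}^k θ_a`. -/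
noncomputable def phiAng (θ : ℕ → ℝ) (k : ℕ) : ℝ := ∑ a ∈ Finset.Icc 1 k, θ a

/-- The signed-area quadratic form `Q` on `ℝ^{N-2}` (coordinates indexed `1,…,N-2`). -/
noncomputable def Qform (N : ℕ) (θ : ℕ → ℝ) (lam : ℕ → ℝ) : ℝ :=
  -(1/2) * ∑ j ∈ Finset.Icc 1 (N-2),
      Real.sin (phiAng θ N - phiAng θ j) * Real.sin (phiAng θ (N-1) - phiAng θ j)
        / Real.sin (θ N) * (lam j)^2
  - ∑ j ∈ Finset.Icc 1 (N-2), ∑ k ∈ Finset.Icc (j+1) (N-2),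
      Real.sin (phiAng θ N - phiAng θ j) * Real.sin (phiAng θ (N-1) - phiAng θ k)
        / Real.sin (θ N) * (lam j * lam k)

/-- The vector `v`, `v_j = -sin(φ_N - φ_j)/sin(θ_N)`. -/
noncomputable def vvec (N : ℕ) (θ : ℕ → ℝ) (j : ℕ) : ℝ :=
  -(Real.sin (phiAng θ N - phiAng θ j)) / Real.sin (θ N)

/-- The vector `w`, `w_j = sin(φ_{N-1} - φ_j)/sin(θ_N)`. -/
noncomputable def wvec (N : ℕ) (θ : ℕ → ℝ) (j : ℕ) : ℝ :=
  Real.sin (phiAng θ (N-1) - phiAng θ j) / Real.sin (θ N)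

/-- The extended side lengths: `λ_k` for `k ≤ N-2`, `λ_{N-1} = vᵀλ`, `λ_N = wᵀλ`. -/
noncomputable def lamExt (N : ℕ) (θ : ℕ → ℝ) (lam : ℕ → ℝ) (k : ℕ) : ℝ :=
  if k = N - 1 then ∑ j ∈ Finset.Icc 1 (N-2), vvec N θ j * lam j
  else if k = N then ∑ j ∈ Finset.Icc 1 (N-2), wvec N θ j * lam j
  else lam k

open Real Finset

theorem setOf_eq_zero_eq_of_eq_mul {α M₀ : Type*} [MulZeroClass M₀] [NoZeroDivisors M₀]
    {f g : α → M₀} {c : M₀} (hc : c ≠ 0) (h : ∀ z, g z = c * f z) :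
    {z | f z = 0} = {z | g z = 0} := by
  ext z
  simp [h, hc]

theorem setOf_eq_zero_ne_of_mul_sub_mul_ne_zero {K V : Type*} [Field K] [AddCommGroup V]
    [Module K V] (f g : V →ₗ[K] K) (x y : V) (h : f x * g y - f y * g x ≠ 0) :
    {z | f z = 0} ≠ {z | g z = 0} := by
  intro hfg
  have hz : g y • x - g x • y ∈ {z | g z = 0} := by
    simp only [Set.mem_ofPred_eq, map_sub, map_smul, smul_eq_mul]
    ring
  rw [← hfg, Set.mem_ofPred_eq, map_sub, map_smul, map_smul, smul_eq_mul, smul_eq_mul] at hz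
  exact h (by linear_combination hz)

theorem sin_sub_mul_sin_sub_sub_sin_sub_mul_sin_sub (A B x y : ℝ) :
    sin (A - x) * sin (B - y) - sin (A - y) * sin (B - x) = sin (A - B) * sin (x - y) := by
  simp only [sin_sub]
  ring

theorem sin_eq_zero_iff_eq_pi_of_pos_of_lt_two_pi {x : ℝ} (h0 : 0 < x) (h2 : x < 2 * π) :
    sin x = 0 ↔ x = π := by
  rw [← neg_eq_zero, ← sin_sub_pi, sin_eq_zero_iff_of_lt_of_lt (by linarith) (by linarith),
    sub_eq_zero]

theorem phiAng_zero (θ : ℕ → ℝ) : phiAng θ 0 = 0 := by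
  simp [phiAng]

theorem phiAng_succ (θ : ℕ → ℝ) (k : ℕ) : phiAng θ (k + 1) = phiAng θ k + θ (k + 1) :=
  sum_Icc_succ_top (Nat.le_add_left 1 k) θ

theorem phiAng_one (θ : ℕ → ℝ) : phiAng θ 1 = θ 1 := by
  rw [phiAng_succ, phiAng_zero, zero_add]

theorem phiAng_two (θ : ℕ → ℝ) : phiAng θ 2 = θ 1 + θ 2 := by
  rw [← phiAng_one θ]; exact phiAng_succ θ 1

theorem phiAng_three (θ : ℕ → ℝ) : phiAng θ 3 = θ 1 + θ 2 + θ 3 := by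
  rw [← phiAng_two θ]; exact phiAng_succ θ 2

theorem phiAng_four (θ : ℕ → ℝ) : phiAng θ 4 = θ 1 + θ 2 + θ 3 + θ 4 := by
  rw [← phiAng_three θ]; exact phiAng_succ θ 3

theorem phiAng_strictMonoOn {N : ℕ} {θ : ℕ → ℝ} (hpos : ∀ k, 1 ≤ k → k ≤ N → 0 < θ k) :
    StrictMonoOn (phiAng θ) (Set.Iic N) :=
  strictMonoOn_Iic_of_lt_succ fun m hm => by
    rw [Order.succ_eq_add_one, phiAng_succ]
    linarith [hpos (m + 1) (by omega) hm]

section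

variable {N : ℕ} {θ : ℕ → ℝ}

theorem phiAng_sub_mem_Ioo (hpos : ∀ k, 1 ≤ k → k ≤ N → 0 < θ k)
    (hsum : phiAng θ N = 2 * π) {i j : ℕ} (hij : i < j) (hj : j ≤ N) (hij' : 0 < i ∨ j < N) :
    phiAng θ j - phiAng θ i ∈ Set.Ioo 0 (2 * π) := by
  have hmono := phiAng_strictMonoOn hpos
  have hmem {k : ℕ} (hk : k ≤ N) : k ∈ Set.Iic N := hk
  have h0 : phiAng θ 0 = 0 := phiAng_zero θ
  refine ⟨by linarith [hmono (hmem (by omega)) (hmem hj) hij], ?_⟩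
  rcases hij' with hi | hjN
  · linarith [hmono (hmem (Nat.zero_le N)) (hmem (by omega)) hi,
      hmono.monotoneOn (hmem hj) (hmem le_rfl) hj]
  · linarith [hmono.monotoneOn (hmem (Nat.zero_le N)) (hmem (by omega)) (Nat.zero_le i),
      hmono (hmem hj) (hmem le_rfl) hjN]

theorem sin_phiAng_sub_eq_zero_iff (hθ : ∀ k, 1 ≤ k → k ≤ N → θ k ∈ Set.Ioo 0 π)
    (hsum : phiAng θ N = 2 * π) {i j : ℕ} (hij : i < j) (hj : j ≤ N) (hij' : 0 < i ∨ j < N) :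
    sin (phiAng θ j - phiAng θ i) = 0 ↔ phiAng θ j - phiAng θ i = π :=
  have h := phiAng_sub_mem_Ioo (fun k h1 h2 => (hθ k h1 h2).1) hsum hij hj hij'
  sin_eq_zero_iff_eq_pi_of_pos_of_lt_two_pi h.1 h.2

theorem vvec_eq_zero_iff (hθ : ∀ k, 1 ≤ k → k ≤ N → θ k ∈ Set.Ioo 0 π)
    (hsum : phiAng θ N = 2 * π) {i : ℕ} (hi : 0 < i) (hiN : i < N) :
    vvec N θ i = 0 ↔ phiAng θ N - phiAng θ i = π := by
  rw [vvec, div_eq_zero_iff, neg_eq_zero,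
    or_iff_left (sin_pos_of_mem_Ioo (hθ N (by omega) le_rfl)).ne',
    sin_phiAng_sub_eq_zero_iff hθ hsum hiN le_rfl (.inl hi)]

theorem wvec_eq_zero_iff (hθ : ∀ k, 1 ≤ k → k ≤ N → θ k ∈ Set.Ioo 0 π)
    (hsum : phiAng θ N = 2 * π) {i : ℕ} (hiN : i < N - 1) :
    wvec N θ i = 0 ↔ phiAng θ (N - 1) - phiAng θ i = π := by
  rw [wvec, div_eq_zero_iff, or_iff_left (sin_pos_of_mem_Ioo (hθ N (by omega) le_rfl)).ne',
    sin_phiAng_sub_eq_zero_iff hθ hsum hiN (by omega) (.inr (by omega))]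

theorem vvec_one_ne_zero (hθ : ∀ k, 1 ≤ k → k ≤ N → θ k ∈ Set.Ioo 0 π)
    (hsum : phiAng θ N = 2 * π) (hN : 2 ≤ N) : vvec N θ 1 ≠ 0 := by
  rw [Ne, vvec_eq_zero_iff hθ hsum one_pos hN, hsum, phiAng_one]
  linarith [(hθ 1 le_rfl (by omega)).2]

theorem wvec_sub_two_ne_zero (hθ : ∀ k, 1 ≤ k → k ≤ N → θ k ∈ Set.Ioo 0 π)
    (hsum : phiAng θ N = 2 * π) (hN : 2 ≤ N) : wvec N θ (N - 2) ≠ 0 := by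
  have hsucc := phiAng_succ θ (N - 2)
  rw [show N - 2 + 1 = N - 1 by omega] at hsucc
  rw [Ne, wvec_eq_zero_iff hθ hsum (by omega), hsucc, add_sub_cancel_left]
  exact (hθ (N - 1) (by omega) (by omega)).2.ne

theorem vvec_mul_wvec_sub_vvec_mul_wvec (hN : 1 ≤ N) (hs : sin (θ N) ≠ 0) (i j : ℕ) :
    vvec N θ i * wvec N θ j - vvec N θ j * wvec N θ i
      = sin (phiAng θ j - phiAng θ i) / sin (θ N) := by
  have key := sin_sub_mul_sin_sub_sub_sin_sub_mul_sin_sub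
    (phiAng θ N) (phiAng θ (N - 1)) (phiAng θ i) (phiAng θ j)
  have hN' : phiAng θ N - phiAng θ (N - 1) = θ N := by
    obtain ⟨n, rfl⟩ : ∃ n, N = n + 1 := ⟨N - 1, by omega⟩
    rw [Nat.add_sub_cancel, phiAng_succ, add_sub_cancel_left]
  rw [hN'] at key
  rw [← neg_sub (phiAng θ i) (phiAng θ j), sin_neg]
  simp only [vvec, wvec]
  field_simp
  linear_combination -key

theorem lamExt_of_le (lam : ℕ → ℝ) {k : ℕ} (hk : 1 ≤ k) (hkN : k ≤ N - 2) :
    lamExt N θ lam k = lam k := by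
  rw [lamExt, if_neg (by omega), if_neg (by omega)]

theorem lamExt_sub_one (lam : ℕ → ℝ) :
    lamExt N θ lam (N - 1) = ∑ j ∈ Icc 1 (N - 2), vvec N θ j * lam j :=
  if_pos rfl

theorem lamExt_self (lam : ℕ → ℝ) (hN : 1 ≤ N) :
    lamExt N θ lam N = ∑ j ∈ Icc 1 (N - 2), wvec N θ j * lam j := by
  rw [lamExt, if_neg (by omega), if_pos rfl]

variable (N θ) in
noncomputable def lamExtLinearMap (k : ℕ) : (ℕ → ℝ) →ₗ[ℝ] ℝ where
  toFun lam := lamExt N θ lam k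
  map_add' x y := by
    simp only [lamExt]
    split_ifs <;> simp [mul_add, sum_add_distrib]
  map_smul' c x := by
    simp only [lamExt]
    split_ifs <;> simp [mul_sum, mul_left_comm]

theorem exists_ne_vvec_ne_zero (hθ : ∀ k, 1 ≤ k → k ≤ N → θ k ∈ Set.Ioo 0 π)
    (hsum : phiAng θ N = 2 * π) (hN : 4 ≤ N) (h4 : N = 4 → θ 1 + θ 2 ≠ π) (a : ℕ) :
    ∃ i ∈ Icc 1 (N - 2), i ≠ a ∧ vvec N θ i ≠ 0 := by
  rcases eq_or_ne a 1 with rfl | ha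
  · by_cases h2 : vvec N θ 2 = 0
    · rw [vvec_eq_zero_iff hθ hsum two_pos (by omega)] at h2
      have hN4 : N ≠ 4 := by
        rintro rfl
        exact h4 rfl (by linarith [phiAng_two θ])
      refine ⟨3, mem_Icc.2 ⟨by omega, by omega⟩, by omega, ?_⟩
      rw [Ne, vvec_eq_zero_iff hθ hsum three_pos (by omega)]
      have := phiAng_strictMonoOn (fun k h1 h2 => (hθ k h1 h2).1)
        (show 2 ∈ Set.Iic N by simp; omega) (show 3 ∈ Set.Iic N by simp; omega) (by norm_num)
      linarith
    · exact ⟨2, mem_Icc.2 ⟨by omega, by omega⟩, by omega, h2⟩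
  · exact ⟨1, mem_Icc.2 ⟨le_rfl, by omega⟩, ha.symm, vvec_one_ne_zero hθ hsum (by omega)⟩

theorem exists_ne_wvec_ne_zero (hθ : ∀ k, 1 ≤ k → k ≤ N → θ k ∈ Set.Ioo 0 π)
    (hsum : phiAng θ N = 2 * π) (hN : 4 ≤ N) (h4 : N = 4 → θ 2 + θ 3 ≠ π) (a : ℕ) :
    ∃ i ∈ Icc 1 (N - 2), i ≠ a ∧ wvec N θ i ≠ 0 := by
  rcases eq_or_ne a (N - 2) with rfl | ha
  · by_cases h3 : wvec N θ (N - 3) = 0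
    · rw [wvec_eq_zero_iff hθ hsum (by omega)] at h3
      have hN4 : N ≠ 4 := by
        rintro rfl
        exact h4 rfl (by linarith [phiAng_three θ, phiAng_one θ])
      refine ⟨N - 4, mem_Icc.2 ⟨by omega, by omega⟩, by omega, ?_⟩
      rw [Ne, wvec_eq_zero_iff hθ hsum (by omega)]
      have := phiAng_strictMonoOn (fun k h1 h2 => (hθ k h1 h2).1)
        (show N - 4 ∈ Set.Iic N by simp) (show N - 3 ∈ Set.Iic N by simp) (by omega)
      linarith
    · exact ⟨N - 3, mem_Icc.2 ⟨by omega, by omega⟩, by omega, h3⟩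
  · exact ⟨N - 2, mem_Icc.2 ⟨by omega, le_rfl⟩, Ne.symm ha,
      wvec_sub_two_ne_zero hθ hsum (by omega)⟩

theorem setOf_lamExt_eq_zero_ne (hθ : ∀ k, 1 ≤ k → k ≤ N → θ k ∈ Set.Ioo 0 π)
    (hsum : phiAng θ N = 2 * π) (hN : 4 ≤ N) (h4 : N = 4 → θ 1 + θ 2 ≠ π ∧ θ 2 + θ 3 ≠ π)
    {a b : ℕ} (ha : 1 ≤ a) (hab : a < b) (hb : b ≤ N) :
    {lam | lamExt N θ lam a = 0} ≠ {lam | lamExt N θ lam b = 0} := by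
  have hsN : sin (θ N) ≠ 0 := (sin_pos_of_mem_Ioo (hθ N (by omega) le_rfl)).ne'
  have hsingle : ∀ (c : ℕ → ℝ) {i}, i ∈ Icc 1 (N - 2) →
      ∑ j ∈ Icc 1 (N - 2), c j * (Pi.single i 1 : ℕ → ℝ) j = c i := fun c i hi => by
    simp [Pi.single_apply, hi]
  have key : ∀ {a b : ℕ} (x y : ℕ → ℝ),
      lamExt N θ x a * lamExt N θ y b - lamExt N θ y a * lamExt N θ x b ≠ 0 →
      {lam | lamExt N θ lam a = 0} ≠ {lam | lamExt N θ lam b = 0} := fun x y =>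
    setOf_eq_zero_ne_of_mul_sub_mul_ne_zero (lamExtLinearMap N θ _) (lamExtLinearMap N θ _) x y
  rcases (show b ≤ N - 2 ∨ b = N - 1 ∨ b = N by omega) with hb2 | rfl | hbN
  · refine key (Pi.single a 1) (Pi.single b 1) ?_
    simp [lamExt_of_le _ ha (hab.le.trans hb2), lamExt_of_le _ (ha.trans hab.le) hb2, hab.ne,
      hab.ne']
  · have hla (lam : ℕ → ℝ) : lamExt N θ lam a = lam a := lamExt_of_le lam ha (by omega)
    obtain ⟨i, hi, hia, hvi⟩ := exists_ne_vvec_ne_zero hθ hsum hN (fun h => (h4 h).1) a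
    refine key (Pi.single a 1) (Pi.single i 1) ?_
    simpa [hla, lamExt_sub_one, hsingle _ hi, hia]
  · rw [hbN]
    rcases (show a ≤ N - 2 ∨ a = N - 1 by omega) with ha2 | rfl
    · have hla (lam : ℕ → ℝ) : lamExt N θ lam a = lam a := lamExt_of_le lam ha ha2
      obtain ⟨i, hi, hia, hwi⟩ := exists_ne_wvec_ne_zero hθ hsum hN (fun h => (h4 h).2) a
      refine key (Pi.single a 1) (Pi.single i 1) ?_
      simpa [hla, lamExt_self _ (by omega : 1 ≤ N), hsingle _ hi, hia]
    · refine key (Pi.single 1 1) (Pi.single 2 1) ?_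
      simp only [lamExt_sub_one, lamExt_self _ (by omega : 1 ≤ N),
        hsingle _ (mem_Icc.2 ⟨le_rfl, (by omega : 1 ≤ N - 2)⟩),
        hsingle _ (mem_Icc.2 ⟨(by omega : 1 ≤ 2), (by omega : 2 ≤ N - 2)⟩),
        vvec_mul_wvec_sub_vvec_mul_wvec (by omega) hsN,
        phiAng_two, phiAng_one, add_sub_cancel_left]
      exact div_ne_zero (sin_pos_of_mem_Ioo (hθ 2 (by omega) (by omega))).ne' hsN

theorem setOf_lamExt_one_eq_two (hθ : ∀ k, 1 ≤ k → k ≤ 3 → θ k ∈ Set.Ioo 0 π)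
    (hsum : phiAng θ 3 = 2 * π) :
    {lam | lamExt 3 θ lam 1 = 0} = {lam | lamExt 3 θ lam 2 = 0} :=
  setOf_eq_zero_eq_of_eq_mul (vvec_one_ne_zero hθ hsum (by norm_num)) fun lam => by
    rw [lamExt_of_le lam le_rfl le_rfl]
    exact (lamExt_sub_one lam).trans (by simp)

theorem setOf_lamExt_one_eq_three (hθ : ∀ k, 1 ≤ k → k ≤ 4 → θ k ∈ Set.Ioo 0 π)
    (hsum : phiAng θ 4 = 2 * π) (h12 : θ 1 + θ 2 = π) :
    {lam | lamExt 4 θ lam 1 = 0} = {lam | lamExt 4 θ lam 3 = 0} := by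
  have hv2 : vvec 4 θ 2 = 0 := (vvec_eq_zero_iff hθ hsum two_pos (by norm_num)).2
    (by rw [hsum, phiAng_two]; linarith)
  refine setOf_eq_zero_eq_of_eq_mul (vvec_one_ne_zero hθ hsum (by norm_num)) fun lam => ?_
  rw [lamExt_of_le lam le_rfl (by norm_num)]
  exact (lamExt_sub_one lam).trans (by simp [sum_Icc_succ_top, hv2])

theorem setOf_lamExt_two_eq_four (hθ : ∀ k, 1 ≤ k → k ≤ 4 → θ k ∈ Set.Ioo 0 π)
    (hsum : phiAng θ 4 = 2 * π) (h23 : θ 2 + θ 3 = π) :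
    {lam | lamExt 4 θ lam 2 = 0} = {lam | lamExt 4 θ lam 4 = 0} := by
  have hw1 : wvec 4 θ 1 = 0 := (wvec_eq_zero_iff hθ hsum (by norm_num)).2
    (by rw [show 4 - 1 = 3 from rfl, phiAng_three, phiAng_one]; linarith)
  refine setOf_eq_zero_eq_of_eq_mul (wvec_sub_two_ne_zero hθ hsum (by norm_num)) fun lam => ?_
  rw [lamExt_of_le (N := 4) (k := 2) lam (by norm_num) le_rfl]
  exact (lamExt_self (N := 4) lam (by norm_num)).trans (by simp [sum_Icc_succ_top, hw1])

end

theorem exists_add_succ_mod_four_eq_pi_iff {θ : ℕ → ℝ} (hsum : phiAng θ 4 = 2 * π) :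
    (∃ k, 1 ≤ k ∧ k ≤ 4 ∧ θ k + θ (k % 4 + 1) = π) ↔ θ 1 + θ 2 = π ∨ θ 2 + θ 3 = π := by
  rw [phiAng_four] at hsum
  constructor
  · rintro ⟨k, hk1, hk4, hk⟩
    interval_cases k <;> simp only [Nat.reduceMod, Nat.reduceAdd] at hk
    all_goals first | exact .inl (by linarith) | exact .inr (by linarith)
  · rintro (h | h)
    · exact ⟨1, le_rfl, by norm_num, h⟩
    · exact ⟨2, by norm_num, by norm_num, h⟩

/-- The `N` hyperplanes `{λ : λ_k = 0}` (with `λ_{N-1} = vᵀλ`, `λ_N = wᵀλ`) are pairwise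
distinct if and only if it is not the case that `N = 3`, and not the case that `N = 4` with
`θ_k + θ_{k+1} = π` for some `k` (indices cyclic mod 4). -/
theorem stmt5 (N : ℕ) (hN : 3 ≤ N) (θ : ℕ → ℝ)
    (hθ : ∀ k, 1 ≤ k → k ≤ N → θ k ∈ Set.Ioo 0 Real.pi)
    (hsum : ∑ k ∈ Finset.Icc 1 N, θ k = 2 * Real.pi) :
    (∀ j k, 1 ≤ j → j ≤ N → 1 ≤ k → k ≤ N → j ≠ k →
        {lam : ℕ → ℝ | lamExt N θ lam j = 0} ≠ {lam : ℕ → ℝ | lamExt N θ lam k = 0})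
      ↔ ¬(N = 3) ∧ ¬(N = 4 ∧ ∃ k, 1 ≤ k ∧ k ≤ 4 ∧ θ k + θ (k % 4 + 1) = Real.pi) := by
  change phiAng θ N = 2 * π at hsum
  constructor
  · intro hdist
    refine ⟨?_, ?_⟩
    · rintro rfl
      exact hdist 1 2 (by norm_num) (by norm_num) (by norm_num) (by norm_num) (by norm_num)
        (setOf_lamExt_one_eq_two hθ hsum)
    · rintro ⟨rfl, hk⟩
      rcases (exists_add_succ_mod_four_eq_pi_iff hsum).1 hk with h | h
      · exact hdist 1 3 (by norm_num) (by norm_num) (by norm_num) (by norm_num) (by norm_num)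
          (setOf_lamExt_one_eq_three hθ hsum h)
      · exact hdist 2 4 (by norm_num) (by norm_num) (by norm_num) (by norm_num) (by norm_num)
          (setOf_lamExt_two_eq_four hθ hsum h)
  · rintro ⟨hN3, hN4⟩ j k hj hjN hk hkN hjk
    have h4 : N = 4 → θ 1 + θ 2 ≠ π ∧ θ 2 + θ 3 ≠ π := by
      rintro rfl
      rw [← not_or, ← exists_add_succ_mod_four_eq_pi_iff hsum]
      exact fun h => hN4 ⟨rfl, h⟩
    rcases hjk.lt_or_gt with h | h
    · exact setOf_lamExt_eq_zero_ne hθ hsum (by omega) h4 hj h hkN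
    · exact (setOf_lamExt_eq_zero_ne hθ hsum (by omega) h4 hk h hjN).symm
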